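/- Let ε ∈ [0,1], τ > 0, and let Q : S × A → ℝ satisfy ‖Q‖∞ ≤ 1/(1−γ). Let π be the ε-softmax policy of Q with temperature τ, let Q* : S × A → ℝ satisfy H(Q*) = Q*, and let Q^π : S × A → ℝ satisfy H_π(Q^π) = Q^π. Then ‖Q^π − Q*‖∞² ≤ (12 γ²/(1−γ)²) ‖Q − Q*‖∞² + 12 ε²/(1−γ)⁴ + 3 τ² (log|A|)²/(1−γ)². -/

import Mathlib

/-!
Write `πQ(s) = ∑ₐ π(a|s) Q(s, a)`. Subtracting the two Bellman equations gives
`Q^π − Q* = γ P (πQ^π − max Q*)`, hence `‖Q^π − Q*‖ ≤ γ (‖Q^π − Q*‖ + δ)` where `δ` bounds the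
greedy gap `maxₐ Q*(s, a) − πQ*(s)`. Replacing `Q*` by `Q` in that gap costs `2 ‖Q − Q*‖`.
For `Q` itself the uniform part of `π` loses at most `2ε/(1−γ)`, and the softmax part `σ` at
most `τ log |A|`: the `σ`-average of `q` is `τ log ∑ exp (q/τ) − τ H(σ)`, where
`τ log ∑ exp (q/τ) ≥ max q` and the entropy `H(σ) ≤ log |A|` by Jensen. Solve for
`‖Q^π − Q*‖` and use `(a+b+c)² ≤ 3(a²+b²+c²)`.
-/

section

variable {S A : Type*} [Fintype S] [Fintype A] [Nonempty S] [Nonempty A]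

/-- Sup norm on `S × A → ℝ`. -/
noncomputable def supNorm (Q : S × A → ℝ) : ℝ :=
  Finset.univ.sup' Finset.univ_nonempty fun y => |Q y|

/-- The Bellman optimality operator. -/
noncomputable def bellmanOpt (p : S × A → S → ℝ) (R : S × A → ℝ) (γ : ℝ)
    (Q : S × A → ℝ) : S × A → ℝ :=
  fun sa => R sa + γ * ∑ s', p sa s' *
    (Finset.univ.sup' Finset.univ_nonempty fun a' => Q (s', a'))

/-- The policy Bellman operator `H_π`. -/
noncomputable def bellmanPol (p : S × A → S → ℝ) (R : S × A → ℝ) (γ : ℝ)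
    (π : S → A → ℝ) (Q : S × A → ℝ) : S × A → ℝ :=
  fun sa => R sa + γ * ∑ s', ∑ a', p sa s' * π s' a' * Q (s', a')

/-- The `ε`-softmax policy of `Q` with temperature `τ`. -/
noncomputable def softmaxPolicy (Q : S × A → ℝ) (ε τ : ℝ) : S → A → ℝ :=
  fun s a => ε / (Fintype.card A : ℝ) +
    (1 - ε) * Real.exp (Q (s, a) / τ) / ∑ a', Real.exp (Q (s, a') / τ)

open Finset

section WeightedSum

variable {ι : Type*} [Fintype ι] {w : ι → ℝ}

theorem sum_mul_le_of_le (hw0 : ∀ i, 0 ≤ w i) (hw1 : ∑ i, w i = 1) {g : ι → ℝ} {c : ℝ}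
    (hg : ∀ i, g i ≤ c) : ∑ i, w i * g i ≤ c :=
  calc ∑ i, w i * g i ≤ ∑ i, w i * c :=
        sum_le_sum fun i _ => mul_le_mul_of_nonneg_left (hg i) (hw0 i)
    _ = c := by rw [← sum_mul, hw1, one_mul]

theorem abs_sum_mul_le_of_abs_le (hw0 : ∀ i, 0 ≤ w i) (hw1 : ∑ i, w i = 1) {g : ι → ℝ}
    {c : ℝ} (hg : ∀ i, |g i| ≤ c) : |∑ i, w i * g i| ≤ c :=
  calc |∑ i, w i * g i| ≤ ∑ i, w i * |g i| := by
        simpa only [abs_mul, abs_of_nonneg (hw0 _)] using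
          abs_sum_le_sum_abs (fun i => w i * g i) univ
    _ ≤ c := sum_mul_le_of_le hw0 hw1 hg

variable [Nonempty ι]

theorem sum_mul_le_sup' (hw0 : ∀ i, 0 ≤ w i) (hw1 : ∑ i, w i = 1) (g : ι → ℝ) :
    ∑ i, w i * g i ≤ univ.sup' univ_nonempty g :=
  sum_mul_le_of_le hw0 hw1 fun i => le_sup' g (mem_univ i)

theorem sup'_sub_sum_mul_le_of_abs_sub_le (hw0 : ∀ i, 0 ≤ w i) (hw1 : ∑ i, w i = 1)
    {f g : ι → ℝ} {δ : ℝ} (hfg : ∀ i, |f i - g i| ≤ δ) :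
    univ.sup' univ_nonempty g - ∑ i, w i * g i ≤
      univ.sup' univ_nonempty f - ∑ i, w i * f i + 2 * δ := by
  have hsup : univ.sup' univ_nonempty g ≤ univ.sup' univ_nonempty f + δ :=
    sup'_le _ _ fun i _ => by linarith [(abs_le.1 (hfg i)).1, le_sup' f (mem_univ i)]
  have havg : ∑ i, w i * f i - ∑ i, w i * g i ≤ δ := by
    simp only [← sum_sub_distrib, ← mul_sub]
    exact sum_mul_le_of_le hw0 hw1 fun i => (abs_le.1 (hfg i)).2
  linarith

end WeightedSum

section Softmax

variable {ι : Type*} [Fintype ι]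

theorem neg_log_card_le_sum_mul_log {σ : ι → ℝ} (hσ0 : ∀ i, 0 < σ i) (hσ1 : ∑ i, σ i = 1) :
    -Real.log (Fintype.card ι) ≤ ∑ i, σ i * Real.log (σ i) := by
  have jensen := strictConcaveOn_log_Ioi.concaveOn.le_map_sum (t := univ) (w := σ)
    (p := fun i => (σ i)⁻¹) (fun i _ => (hσ0 i).le) hσ1 fun i _ => inv_pos.2 (hσ0 i)
  simp only [smul_eq_mul, Real.log_inv, mul_neg, sum_neg_distrib] at jensen
  rw [sum_congr rfl fun i _ => mul_inv_cancel₀ (hσ0 i).ne'] at jensen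
  simp only [sum_const, card_univ, nsmul_eq_mul, mul_one] at jensen
  linarith

noncomputable def softmax (τ : ℝ) (q : ι → ℝ) (i : ι) : ℝ :=
  Real.exp (q i / τ) / ∑ j, Real.exp (q j / τ)

noncomputable def epsSoftmax (ε τ : ℝ) (q : ι → ℝ) (i : ι) : ℝ :=
  ε / Fintype.card ι + (1 - ε) * softmax τ q i

variable [Nonempty ι] {τ : ℝ} {q : ι → ℝ}

theorem sum_exp_div_pos : 0 < ∑ j, Real.exp (q j / τ) :=
  sum_pos (fun _ _ => Real.exp_pos _) univ_nonempty

theorem softmax_pos (i : ι) : 0 < softmax τ q i :=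
  div_pos (Real.exp_pos _) sum_exp_div_pos

theorem sum_softmax : ∑ i, softmax τ q i = 1 := by
  simp only [softmax, ← sum_div]
  exact div_self sum_exp_div_pos.ne'

theorem sup'_sub_log_card_le_sum_softmax_mul (hτ : 0 < τ) :
    univ.sup' univ_nonempty q - τ * Real.log (Fintype.card ι) ≤ ∑ i, softmax τ q i * q i := by
  set Z := ∑ j, Real.exp (q j / τ)
  have hZ : 0 < Z := sum_exp_div_pos
  have hq : ∀ i, q i = τ * Real.log (softmax τ q i) + τ * Real.log Z := fun i => by
    rw [softmax, Real.log_div (Real.exp_ne_zero _) hZ.ne', Real.log_exp]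
    field_simp
    ring
  have hsum : ∑ i, softmax τ q i * q i =
      τ * ∑ i, softmax τ q i * Real.log (softmax τ q i) + τ * Real.log Z :=
    calc ∑ i, softmax τ q i * q i
        = ∑ i, (τ * (softmax τ q i * Real.log (softmax τ q i)) + τ * Real.log Z * softmax τ q i) :=
          sum_congr rfl fun i _ => by rw [hq i]; ring
      _ = _ := by rw [sum_add_distrib, ← mul_sum, ← mul_sum, sum_softmax, mul_one]
  have hmax : univ.sup' univ_nonempty q ≤ τ * Real.log Z := sup'_le _ _ fun i _ =>
    (div_le_iff₀' hτ).1 <| (Real.le_log_iff_exp_le hZ).2 <|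
      single_le_sum (f := fun j => Real.exp (q j / τ)) (fun j _ => (Real.exp_pos _).le) (mem_univ i)
  have hent := mul_le_mul_of_nonneg_left
    (neg_log_card_le_sum_mul_log (softmax_pos (τ := τ) (q := q)) sum_softmax) hτ.le
  linarith

variable {ε : ℝ}

theorem epsSoftmax_nonneg (hε0 : 0 ≤ ε) (hε1 : ε ≤ 1) (i : ι) : 0 ≤ epsSoftmax ε τ q i :=
  add_nonneg (by positivity) (mul_nonneg (sub_nonneg.2 hε1) (softmax_pos i).le)

theorem sum_epsSoftmax : ∑ i, epsSoftmax ε τ q i = 1 := by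
  simp only [epsSoftmax, sum_add_distrib, sum_const, card_univ, nsmul_eq_mul, ← mul_sum,
    sum_softmax]
  field_simp
  ring

theorem sup'_sub_sum_epsSoftmax_mul_le (hε0 : 0 ≤ ε) (hε1 : ε ≤ 1) (hτ : 0 < τ) {C : ℝ}
    (hq : ∀ i, |q i| ≤ C) :
    univ.sup' univ_nonempty q - ∑ i, epsSoftmax ε τ q i * q i ≤
      2 * ε * C + τ * Real.log (Fintype.card ι) := by
  have hn : (0 : ℝ) < Fintype.card ι := Nat.cast_pos.2 Fintype.card_pos
  have hsplit : ∑ i, epsSoftmax ε τ q i * q i =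
      ε * ((∑ i, q i) / Fintype.card ι) + (1 - ε) * ∑ i, softmax τ q i * q i := by
    simp only [epsSoftmax, add_mul, sum_add_distrib, mul_sum, sum_div]
    congr 1 <;> refine sum_congr rfl fun i _ => by ring
  have hmax : univ.sup' univ_nonempty q ≤ C := sup'_le _ _ fun i _ => (abs_le.1 (hq i)).2
  have havg : -C ≤ (∑ i, q i) / Fintype.card ι := by
    rw [le_div_iff₀ hn]
    simpa [mul_comm] using sum_le_sum fun i (_ : i ∈ univ) => (abs_le.1 (hq i)).1
  have hsoft := mul_le_mul_of_nonneg_left (sup'_sub_log_card_le_sum_softmax_mul (q := q) hτ)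
    (sub_nonneg.2 hε1)
  have hL : 0 ≤ τ * Real.log (Fintype.card ι) := mul_nonneg hτ.le (Real.log_natCast_nonneg _)
  nlinarith [mul_le_mul_of_nonneg_left hmax hε0, mul_le_mul_of_nonneg_left havg hε0]

end Softmax

theorem abs_le_supNorm (Q : S × A → ℝ) (x : S × A) : |Q x| ≤ supNorm Q :=
  le_sup' (fun y => |Q y|) (mem_univ x)

theorem supNorm_nonneg (Q : S × A → ℝ) : 0 ≤ supNorm Q :=
  (abs_nonneg _).trans (abs_le_supNorm Q (Classical.arbitrary _))

theorem supNorm_le {Q : S × A → ℝ} {c : ℝ} (h : ∀ x, |Q x| ≤ c) : supNorm Q ≤ c :=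
  sup'_le _ _ fun x _ => h x

omit [Fintype S] [Nonempty S] [Nonempty A] in
theorem softmaxPolicy_eq_epsSoftmax (Q : S × A → ℝ) (ε τ : ℝ) (s : S) :
    softmaxPolicy Q ε τ s = epsSoftmax ε τ fun a => Q (s, a) := by
  funext a
  simp only [softmaxPolicy, epsSoftmax, softmax, mul_div_assoc]

section Bellman

variable (p : S × A → S → ℝ) (R : S × A → ℝ) (γ : ℝ) (π : S → A → ℝ)

omit [Nonempty S] in
theorem bellmanPol_sub_bellmanOpt (Q' Q : S × A → ℝ) (sa : S × A) :
    bellmanPol p R γ π Q' sa - bellmanOpt p R γ Q sa =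
      γ * ∑ s', p sa s' * (∑ a', π s' a' * Q' (s', a') -
        univ.sup' univ_nonempty fun a' => Q (s', a')) := by
  simp only [bellmanPol, bellmanOpt, mul_assoc, ← mul_sum, mul_sub, sum_sub_distrib]
  ring

variable {p R γ π}

theorem supNorm_sub_le_of_sup'_sub_sum_le (hp0 : ∀ sa s', 0 ≤ p sa s')
    (hp1 : ∀ sa, ∑ s', p sa s' = 1) (hγ : 0 ≤ γ) (hπ0 : ∀ s a, 0 ≤ π s a)
    (hπ1 : ∀ s, ∑ a, π s a = 1) {Qstar Qpi : S × A → ℝ}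
    (hQstar : bellmanOpt p R γ Qstar = Qstar) (hQpi : bellmanPol p R γ π Qpi = Qpi) {δ : ℝ}
    (hδ : ∀ s, (univ.sup' univ_nonempty fun a => Qstar (s, a)) - ∑ a, π s a * Qstar (s, a) ≤ δ) :
    supNorm (Qpi - Qstar) ≤ γ * (supNorm (Qpi - Qstar) + δ) := by
  have hterm : ∀ s, |∑ a, π s a * Qpi (s, a) - univ.sup' univ_nonempty fun a => Qstar (s, a)| ≤
      supNorm (Qpi - Qstar) + δ := fun s => by
    have hdiff : |∑ a, π s a * (Qpi - Qstar) (s, a)| ≤ supNorm (Qpi - Qstar) :=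
      abs_sum_mul_le_of_abs_le (hπ0 s) (hπ1 s) fun a => abs_le_supNorm _ (s, a)
    simp only [Pi.sub_apply, mul_sub, sum_sub_distrib, abs_le] at hdiff ⊢
    have hgap0 := sum_mul_le_sup' (hπ0 s) (hπ1 s) fun a => Qstar (s, a)
    constructor <;> linarith [hδ s]
  refine supNorm_le fun sa => ?_
  calc |(Qpi - Qstar) sa| = |bellmanPol p R γ π Qpi sa - bellmanOpt p R γ Qstar sa| := by
        rw [hQpi, hQstar, Pi.sub_apply]
    _ = γ * |∑ s', p sa s' * (∑ a, π s' a * Qpi (s', a) -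
          univ.sup' univ_nonempty fun a => Qstar (s', a))| := by
        rw [bellmanPol_sub_bellmanOpt, abs_mul, abs_of_nonneg hγ]
    _ ≤ γ * (supNorm (Qpi - Qstar) + δ) :=
        mul_le_mul_of_nonneg_left (abs_sum_mul_le_of_abs_le (hp0 sa) (hp1 sa) hterm) hγ

end Bellman

theorem sq_le_of_le_mul_add {γ D E ε L : ℝ} (hγ1 : γ < 1) (hD : 0 ≤ D) (hε : 0 ≤ ε)
    (hL : 0 ≤ L) (h : D ≤ γ * (D + (2 * E + 2 * ε / (1 - γ) + L))) :
    D ^ 2 ≤ 12 * γ ^ 2 / (1 - γ) ^ 2 * E ^ 2 + 12 * ε ^ 2 / (1 - γ) ^ 4 +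
      3 * L ^ 2 / (1 - γ) ^ 2 := by
  have h1γ : 0 < 1 - γ := sub_pos.2 hγ1
  set a := 2 * γ * E / (1 - γ)
  set b := 2 * ε / (1 - γ) ^ 2
  set c := L / (1 - γ)
  have hle : D ≤ a + b + c := by
    have hb : 2 * ε / (1 - γ) = (1 - γ) * b := by simp only [b]; field_simp
    have hsolve : (1 - γ) * D ≤ (1 - γ) * a + γ * ((1 - γ) * b) + γ * ((1 - γ) * c) := by
      simp only [a, c, mul_div_cancel₀ _ h1γ.ne']
      rw [hb] at h
      nlinarith
    have hb0 : 0 ≤ b := by positivity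
    have hc0 : 0 ≤ c := by positivity
    nlinarith [mul_le_mul_of_nonneg_left hγ1.le (mul_nonneg h1γ.le (add_nonneg hb0 hc0))]
  calc D ^ 2 ≤ (a + b + c) ^ 2 := pow_le_pow_left₀ hD hle 2
    _ ≤ 3 * a ^ 2 + 3 * b ^ 2 + 3 * c ^ 2 := by
        nlinarith [sq_nonneg (a - b), sq_nonneg (b - c), sq_nonneg (a - c)]
    _ = _ := by simp only [a, b, c]; field_simp; ring

theorem stmt_16_general
    (p : S × A → S → ℝ)
    (hp0 : ∀ sa s', 0 ≤ p sa s')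
    (hp1 : ∀ sa, ∑ s', p sa s' = 1)
    (R : S × A → ℝ)
    (γ : ℝ) (hγ0 : 0 < γ) (hγ1 : γ < 1)
    (ε τ : ℝ) (hε0 : 0 ≤ ε) (hε1 : ε ≤ 1) (hτ : 0 < τ)
    (Q : S × A → ℝ) (hQ : supNorm Q ≤ 1 / (1 - γ))
    (Qstar : S × A → ℝ) (hQstar : bellmanOpt p R γ Qstar = Qstar)
    (Qpi : S × A → ℝ)
    (hQpi : bellmanPol p R γ (softmaxPolicy Q ε τ) Qpi = Qpi) :
    supNorm (Qpi - Qstar) ^ 2 ≤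
      12 * γ ^ 2 / (1 - γ) ^ 2 * supNorm (Q - Qstar) ^ 2 +
        12 * ε ^ 2 / (1 - γ) ^ 4 +
        3 * τ ^ 2 * Real.log (Fintype.card A) ^ 2 / (1 - γ) ^ 2 := by
  have hπ0 : ∀ s a, 0 ≤ softmaxPolicy Q ε τ s a := fun s a => by
    rw [softmaxPolicy_eq_epsSoftmax]; exact epsSoftmax_nonneg hε0 hε1 a
  have hπ1 : ∀ s, ∑ a, softmaxPolicy Q ε τ s a = 1 := fun s => by
    rw [softmaxPolicy_eq_epsSoftmax]; exact sum_epsSoftmax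
  have hgap : ∀ s, (univ.sup' univ_nonempty fun a => Qstar (s, a)) -
      ∑ a, softmaxPolicy Q ε τ s a * Qstar (s, a) ≤
        2 * supNorm (Q - Qstar) + 2 * ε / (1 - γ) + τ * Real.log (Fintype.card A) := fun s => by
    have hclose := sup'_sub_sum_mul_le_of_abs_sub_le (hπ0 s) (hπ1 s)
      fun a => abs_le_supNorm (Q - Qstar) (s, a)
    have hsoft := sup'_sub_sum_epsSoftmax_mul_le hε0 hε1 hτ
      fun a => (abs_le_supNorm Q (s, a)).trans hQ
    rw [← softmaxPolicy_eq_epsSoftmax, mul_one_div] at hsoft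
    linarith
  have hrec := supNorm_sub_le_of_sup'_sub_sum_le hp0 hp1 hγ0.le hπ0 hπ1 hQstar hQpi hgap
  calc supNorm (Qpi - Qstar) ^ 2
      ≤ _ := sq_le_of_le_mul_add hγ1 (supNorm_nonneg _) hε0
          (mul_nonneg hτ.le (Real.log_natCast_nonneg _)) hrec
    _ = _ := by ring

/-- Policy-gap bound for the ε-softmax policy `π` of `Q`:
`‖Q^π − Q*‖∞² ≤ (12γ²/(1−γ)²)‖Q − Q*‖∞² + 12ε²/(1−γ)⁴ + 3τ²(log|A|)²/(1−γ)²`. -/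
theorem stmt_16
    (p : S × A → S → ℝ)
    (hp0 : ∀ sa s', 0 ≤ p sa s')
    (hp1 : ∀ sa, ∑ s', p sa s' = 1)
    (R : S × A → ℝ) (hR : ∀ sa, |R sa| ≤ 1)
    (γ : ℝ) (hγ0 : 0 < γ) (hγ1 : γ < 1)
    (ε τ : ℝ) (hε0 : 0 ≤ ε) (hε1 : ε ≤ 1) (hτ : 0 < τ)
    (Q : S × A → ℝ) (hQ : supNorm Q ≤ 1 / (1 - γ))
    (Qstar : S × A → ℝ) (hQstar : bellmanOpt p R γ Qstar = Qstar)
    (Qpi : S × A → ℝ)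
    (hQpi : bellmanPol p R γ (softmaxPolicy Q ε τ) Qpi = Qpi) :
    supNorm (Qpi - Qstar) ^ 2 ≤
      12 * γ ^ 2 / (1 - γ) ^ 2 * supNorm (Q - Qstar) ^ 2 +
        12 * ε ^ 2 / (1 - γ) ^ 4 +
        3 * τ ^ 2 * Real.log (Fintype.card A) ^ 2 / (1 - γ) ^ 2 :=
  stmt_16_general p hp0 hp1 R γ hγ0 hγ1 ε τ hε0 hε1 hτ Q hQ Qstar hQstar Qpi hQpi

end
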